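/- arXiv:math/0405403 — 2 statements merged into one kernel-verified Lean document; each statement's English description precedes it below -/
import Mathlib

section
/- Let m ≥ 2, q = exp(πi/m), and let τ ∈ ℂ with |τ| > 1. For 1 ≤ i ≤ m-1, define c_i = (-1)^i ∏_{j=1}^i [(q^{m-j+1} - q^{-(m-j+1)})/(q^{i-j+1} - q^{-(i-j+1)})] · [(τ q^{-(j-1)} - τ^{-1} q^{j-1})/(τ² q^{-(i+j-2)} - τ^{-2} q^{i+j-2})] · ∏_{j=i+1}^m [(τ q^{-(j-1)} - τ^{-1} q^{j-1})/(τ² q^{-(i+j-1)} - τ^{-2} q^{i+j-1})]. Then all denominators appearing in c_i are nonzero and c_i = 0. -/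
open Complex

lemma stmt10_aux_abs (m : ℕ) (hm : 2 ≤ m) (q : ℂ)
    (hq : q = Complex.exp (Real.pi * Complex.I / m)) : ‖q‖ = 1 := by
  have : (Real.pi * Complex.I / m : ℂ) = ((Real.pi / m : ℝ) : ℂ) * Complex.I := by
    push_cast; ring
  rw [hq, this, Complex.norm_exp_ofReal_mul_I]

lemma stmt10_aux_q (m : ℕ) (hm : 2 ≤ m) (q : ℂ)
    (hq : q = Complex.exp (Real.pi * Complex.I / m)) (n : ℤ) :
    q ^ n = Complex.exp (n * (Real.pi * Complex.I / m)) := by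
  rw [hq, ← Complex.exp_int_mul]

lemma stmt10_aux_nz1 (m : ℕ) (hm : 2 ≤ m) (q : ℂ)
    (hq : q = Complex.exp (Real.pi * Complex.I / m)) (a : ℤ)
    (ha1 : 1 ≤ a) (ha2 : a ≤ (m : ℤ) - 1) :
    q ^ a - q ^ (-a) ≠ 0 := by
  intro h
  have hq0 : q ≠ 0 := by rw [hq]; exact Complex.exp_ne_zero _
  have h1 : q ^ (2 * a) = 1 := by
    have : q ^ a = q ^ (-a) := by linear_combination h
    rw [two_mul, zpow_add₀ hq0]
    nth_rewrite 2 [this]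
    rw [← zpow_add₀ hq0]
    simp
  rw [stmt10_aux_q m hm q hq, Complex.exp_eq_one_iff] at h1
  obtain ⟨n, hn⟩ := h1
  have hm0 : (m : ℂ) ≠ 0 := Nat.cast_ne_zero.mpr (by omega)
  have hπ : (Real.pi : ℂ) ≠ 0 := by
    exact_mod_cast Complex.ofReal_ne_zero.mpr Real.pi_ne_zero
  have hI : Complex.I ≠ 0 := Complex.I_ne_zero
  have h2 : (a : ℂ) = n * m := by
    field_simp at hn
    have h3 : ((2 * a : ℤ) : ℂ) * (Real.pi * Complex.I) = (n * (2 * m) : ℂ) * (Real.pi * Complex.I) := by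
      push_cast at hn ⊢; linear_combination (Real.pi * Complex.I) * hn
    have h4 := mul_right_cancel₀ (mul_ne_zero hπ hI) h3
    push_cast at h4
    linear_combination h4 / 2
  have h5 : a = n * m := by exact_mod_cast h2
  rcases le_or_gt 1 n with hn1 | hn1
  · nlinarith [h5, ha2, (by exact_mod_cast hm : (2:ℤ) ≤ m)]
  · have : n ≤ 0 := by omega
    nlinarith [h5, ha1, (by exact_mod_cast hm : (2:ℤ) ≤ m)]

lemma stmt10_aux_nz2 (m : ℕ) (hm : 2 ≤ m) (q : ℂ)
    (hq : q = Complex.exp (Real.pi * Complex.I / m))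
    (τ : ℂ) (hτ : 1 < ‖τ‖) (b : ℤ) :
    τ ^ 2 * q ^ (-b) - τ⁻¹ ^ 2 * q ^ b ≠ 0 := by
  intro h
  have habs : ‖q‖ = 1 := stmt10_aux_abs m hm q hq
  have h1 : τ ^ 2 * q ^ (-b) = τ⁻¹ ^ 2 * q ^ b := by linear_combination h
  have h2 := congrArg norm h1
  rw [norm_mul, norm_mul, norm_pow, norm_pow, norm_zpow, norm_zpow, habs, norm_inv] at h2
  simp only [one_zpow, mul_one] at h2
  have ht : (0:ℝ) < ‖τ‖ := by linarith
  rw [inv_pow] at h2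
  have h3 : (‖τ‖) ^ 2 * (‖τ‖) ^ 2 = 1 := by
    nth_rewrite 1 [h2]
    exact inv_mul_cancel₀ (by positivity)
  have h4 : 1 < ‖τ‖ ^ 2 := by nlinarith
  nlinarith [h3, h4]

theorem stmt10 (m : ℕ) (hm : 2 ≤ m)
    (q : ℂ) (hq : q = Complex.exp (Real.pi * Complex.I / m))
    (τ : ℂ) (hτ : 1 < ‖τ‖) :
    ∀ i : ℕ, 1 ≤ i → i ≤ m - 1 →
      (∀ j ∈ Finset.Icc 1 i,
        q ^ ((i : ℤ) - j + 1) - q ^ (-((i : ℤ) - j + 1)) ≠ 0 ∧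
        τ ^ 2 * q ^ (-((i : ℤ) + j - 2)) - τ⁻¹ ^ 2 * q ^ ((i : ℤ) + j - 2) ≠ 0) ∧
      (∀ j ∈ Finset.Icc (i + 1) m,
        τ ^ 2 * q ^ (-((i : ℤ) + j - 1)) - τ⁻¹ ^ 2 * q ^ ((i : ℤ) + j - 1) ≠ 0) ∧
      (-1 : ℂ) ^ i *
        (∏ j ∈ Finset.Icc 1 i,
          ((q ^ ((m : ℤ) - j + 1) - q ^ (-((m : ℤ) - j + 1))) /
              (q ^ ((i : ℤ) - j + 1) - q ^ (-((i : ℤ) - j + 1)))) *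
            ((τ * q ^ (-((j : ℤ) - 1)) - τ⁻¹ * q ^ ((j : ℤ) - 1)) /
              (τ ^ 2 * q ^ (-((i : ℤ) + j - 2)) - τ⁻¹ ^ 2 * q ^ ((i : ℤ) + j - 2)))) *
        (∏ j ∈ Finset.Icc (i + 1) m,
          (τ * q ^ (-((j : ℤ) - 1)) - τ⁻¹ * q ^ ((j : ℤ) - 1)) /
            (τ ^ 2 * q ^ (-((i : ℤ) + j - 1)) - τ⁻¹ ^ 2 * q ^ ((i : ℤ) + j - 1))) = 0 := by
  intro i hi1 hi2
  refine ⟨?_, ?_, ?_⟩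
  · intro j hj
    rw [Finset.mem_Icc] at hj
    refine ⟨stmt10_aux_nz1 m hm q hq _ (by omega) (by omega), stmt10_aux_nz2 m hm q hq τ hτ _⟩
  · intro j hj
    exact stmt10_aux_nz2 m hm q hq τ hτ _
  · have h1 : (1 : ℕ) ∈ Finset.Icc 1 i := Finset.mem_Icc.mpr ⟨le_refl _, hi1⟩
    have hqm : q ^ ((m : ℤ)) = -1 := by
      rw [stmt10_aux_q m hm q hq]
      have hm0 : (m : ℂ) ≠ 0 := Nat.cast_ne_zero.mpr (by omega)
      rw [show ((m : ℤ) : ℂ) * (Real.pi * Complex.I / m) = Real.pi * Complex.I by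
        push_cast; field_simp]
      exact Complex.exp_pi_mul_I
    have hprod : (∏ j ∈ Finset.Icc 1 i,
          ((q ^ ((m : ℤ) - j + 1) - q ^ (-((m : ℤ) - j + 1))) /
              (q ^ ((i : ℤ) - j + 1) - q ^ (-((i : ℤ) - j + 1)))) *
            ((τ * q ^ (-((j : ℤ) - 1)) - τ⁻¹ * q ^ ((j : ℤ) - 1)) /
              (τ ^ 2 * q ^ (-((i : ℤ) + j - 2)) - τ⁻¹ ^ 2 * q ^ ((i : ℤ) + j - 2)))) = 0 := by
      apply Finset.prod_eq_zero h1
      have hnum : q ^ ((m : ℤ) - (1:ℕ) + 1) - q ^ (-((m : ℤ) - (1:ℕ) + 1)) = 0 := by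
        have he : ((m : ℤ) - (1:ℕ) + 1) = (m : ℤ) := by push_cast; ring
        rw [he, hqm]
        have hq0 : q ≠ 0 := by rw [hq]; exact Complex.exp_ne_zero _
        rw [zpow_neg, hqm]
        norm_num
      rw [hnum]
      simp
    rw [hprod]
    ring
end

section
/- Let m ≥ 1, q = exp(πi/m), and τ ∈ ℂ with |τ| > 1. Then c_0 = ∏_{j=1}^m (τ q^{-(j-1)} - τ^{-1} q^{j-1})/(τ² q^{-(j-1)} - τ^{-2} q^{j-1}) is a well-defined nonzero complex number. -/
lemma aux_ne (τ q : ℂ) (hτ : 1 < ‖τ‖) (hq : ‖q‖ = 1)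
    (n : ℕ) (hn : 1 ≤ n) (a b : ℤ) :
    τ ^ n * q ^ a - τ⁻¹ ^ n * q ^ b ≠ 0 := by
  intro h
  rw [sub_eq_zero] at h
  have habs := congrArg (‖·‖) h
  simp only [norm_mul, norm_pow, norm_zpow, norm_inv, hq, one_zpow, mul_one] at habs
  have h1 : 1 < ‖τ‖ ^ n := one_lt_pow₀ hτ (by omega)
  have h2 : ‖τ‖⁻¹ ^ n < 1 := by
    apply pow_lt_one₀ (by positivity)
    · exact inv_lt_one_of_one_lt₀ hτ
    · omega
  rw [habs] at h1
  linarith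

theorem stmt12 (m : ℕ) (hm : 1 ≤ m)
    (q : ℂ) (hq : q = Complex.exp (Real.pi * Complex.I / m))
    (τ : ℂ) (hτ : 1 < ‖τ‖) :
    (∀ j ∈ Finset.Icc 1 m,
      τ ^ 2 * q ^ (-((j : ℤ) - 1)) - τ⁻¹ ^ 2 * q ^ ((j : ℤ) - 1) ≠ 0) ∧
    (∏ j ∈ Finset.Icc 1 m,
      (τ * q ^ (-((j : ℤ) - 1)) - τ⁻¹ * q ^ ((j : ℤ) - 1)) /
        (τ ^ 2 * q ^ (-((j : ℤ) - 1)) - τ⁻¹ ^ 2 * q ^ ((j : ℤ) - 1))) ≠ 0 := by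
  have hqa : ‖q‖ = 1 := by
    rw [hq, Complex.norm_exp]
    have : (↑Real.pi * Complex.I / ↑m).re = 0 := by
      simp [Complex.div_re, Complex.mul_re]
    rw [this, Real.exp_zero]
  constructor
  · intro j _
    exact aux_ne τ q hτ hqa 2 (by norm_num) _ _
  · apply Finset.prod_ne_zero_iff.mpr
    intro j _
    apply div_ne_zero
    · simpa using aux_ne τ q hτ hqa 1 le_rfl (-((j : ℤ) - 1)) ((j : ℤ) - 1)
    · exact aux_ne τ q hτ hqa 2 (by norm_num) _ _
end
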